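/- Necessity of complementary slackness: Let X̂ be a Hermitian n×n matrix and δ̂ a real number with X̂ − p_i ρ_i positive semidefinite for every 1 ≤ i ≤ m and X̂ − δ̂Δ positive semidefinite, and let {Π̂_i}_{i=0}^m be a measurement with P_I({Π̂_i}) = β such that P_D({Π̂_i}) = Tr(X̂) − δ̂β. Then (X̂ − p_i ρ_i)Π̂_i = 0 for every 1 ≤ i ≤ m and (X̂ − δ̂Δ)Π̂_0 = 0. -/

import Mathlib

/-!
Dual feasibility makes every slack matrix `X - pᵢρᵢ`, `X - δΔ` positive semidefinite, and the
trace of a product of two positive semidefinite matrices is nonnegative, vanishing only when the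
product does: writing `A = aᴴa` and `B = bᴴb`, `Tr (AB) = ‖abᴴ‖²` (Frobenius norm). Since the
measurement sums to `1`, the slack traces `Tr ((X - pᵢρᵢ)Πᵢ)` and `Tr ((X - δΔ)Π₀)` add up to
`Tr X - δβ - P_D`, which is zero by assumption, so each of them vanishes.
-/

open Matrix BigOperators ComplexOrder

namespace Matrix

lemma trace_conjTranspose_mul_self_mul_conjTranspose_mul_self {R ι : Type*} [CommRing R]
    [StarRing R] [Fintype ι] (a b : Matrix ι ι R) :
    (aᴴ * a * (bᴴ * b)).trace = ((a * bᴴ)ᴴ * (a * bᴴ)).trace := by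
  rw [conjTranspose_mul, conjTranspose_conjTranspose, ← Matrix.mul_assoc, trace_mul_comm]
  simp only [Matrix.mul_assoc]

section PosSemidef

variable {𝕜 ι : Type*} [RCLike 𝕜] [Fintype ι] [DecidableEq ι]

open scoped MatrixOrder in
lemma PosSemidef.exists_eq_conjTranspose_mul_self {A : Matrix ι ι 𝕜} (hA : A.PosSemidef) :
    ∃ a : Matrix ι ι 𝕜, A = aᴴ * a :=
  CStarAlgebra.nonneg_iff_eq_star_mul_self.mp hA.nonneg

lemma PosSemidef.trace_mul_nonneg {A B : Matrix ι ι 𝕜} (hA : A.PosSemidef) (hB : B.PosSemidef) :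
    0 ≤ (A * B).trace := by
  obtain ⟨a, rfl⟩ := hA.exists_eq_conjTranspose_mul_self
  obtain ⟨b, rfl⟩ := hB.exists_eq_conjTranspose_mul_self
  rw [trace_conjTranspose_mul_self_mul_conjTranspose_mul_self]
  exact (posSemidef_conjTranspose_mul_self _).trace_nonneg

lemma PosSemidef.trace_mul_eq_zero_iff {A B : Matrix ι ι 𝕜} (hA : A.PosSemidef)
    (hB : B.PosSemidef) : (A * B).trace = 0 ↔ A * B = 0 := by
  refine ⟨fun h => ?_, fun h => by rw [h, trace_zero]⟩
  obtain ⟨a, rfl⟩ := hA.exists_eq_conjTranspose_mul_self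
  obtain ⟨b, rfl⟩ := hB.exists_eq_conjTranspose_mul_self
  rw [trace_conjTranspose_mul_self_mul_conjTranspose_mul_self,
    trace_conjTranspose_mul_self_eq_zero_iff] at h
  calc aᴴ * a * (bᴴ * b) = aᴴ * (a * bᴴ) * b := by simp only [Matrix.mul_assoc]
    _ = 0 := by rw [h, Matrix.mul_zero, Matrix.zero_mul]

end PosSemidef

lemma trace_eq_trace_sub_mul_add_of_add_sum_eq_one {R ι κ : Type*} [CommRing R] [Fintype ι]
    [DecidableEq ι] [Fintype κ] (X Y₀ M₀ : Matrix ι ι R) (Y M : κ → Matrix ι ι R) (hM : M₀ + ∑ k, M k = 1) :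
    X.trace = ((X - Y₀) * M₀).trace + ∑ k, ((X - Y k) * M k).trace +
      ((Y₀ * M₀).trace + ∑ k, (Y k * M k).trace) := by
  have hX : X = X * M₀ + ∑ k, X * M k := by rw [← Finset.mul_sum, ← Matrix.mul_add, hM, mul_one]
  conv_lhs => rw [hX]
  simp only [Matrix.sub_mul, trace_add, trace_sub, trace_sum, Finset.sum_sub_distrib]
  ring

end Matrix

theorem stmt_3_general {n m : ℕ}
    (ρ : Fin m → Matrix (Fin n) (Fin n) ℂ) (p : Fin m → ℝ)
    (Δ : Matrix (Fin n) (Fin n) ℂ)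
    -- the dual feasible point
    (X : Matrix (Fin n) (Fin n) ℂ) (δ : ℝ)
    (hfeas1 : ∀ i, (X - (p i : ℂ) • ρ i).PosSemidef)
    (hfeas2 : (X - (δ : ℂ) • Δ).PosSemidef)
    -- a measurement with P_I = β attaining the dual value
    (β : ℝ)
    (M0 : Matrix (Fin n) (Fin n) ℂ) (M : Fin m → Matrix (Fin n) (Fin n) ℂ)
    (hM0 : M0.PosSemidef) (hM : ∀ i, (M i).PosSemidef)
    (hMsum : M0 + ∑ i, M i = 1)
    (hPI : (Δ * M0).trace = (β : ℂ))
    (hPD : ∑ i, p i * ((ρ i * M i).trace).re = X.trace.re - δ * β) :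
    (∀ i, (X - (p i : ℂ) • ρ i) * M i = 0) ∧ (X - (δ : ℂ) • Δ) * M0 = 0 := by
  set s₀ := ((X - (δ : ℂ) • Δ) * M0).trace
  set s : Fin m → ℂ := fun i => ((X - (p i : ℂ) • ρ i) * M i).trace
  have hs₀ : 0 ≤ s₀ := hfeas2.trace_mul_nonneg hM0
  have hs : 0 ≤ ∑ i, s i := Finset.sum_nonneg fun i _ => (hfeas1 i).trace_mul_nonneg (hM i)
  have hsum_re : (s₀ + ∑ i, s i).re = 0 := by
    have := congrArg Complex.re <|
      trace_eq_trace_sub_mul_add_of_add_sum_eq_one X ((δ : ℂ) • Δ) M0 (fun i => (p i : ℂ) • ρ i) M hMsum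
    simp only [smul_mul, trace_smul, smul_eq_mul, hPI, Complex.add_re, Complex.re_sum,
      Complex.re_ofReal_mul, Complex.ofReal_re] at this ⊢
    linarith
  have hsum : s₀ + ∑ i, s i = 0 :=
    Complex.ext hsum_re (Complex.nonneg_iff.mp (add_nonneg hs₀ hs)).2.symm
  obtain ⟨h₀, hs_zero⟩ := (add_eq_zero_iff_of_nonneg hs₀ hs).mp hsum
  rw [Finset.sum_eq_zero_iff_of_nonneg fun i _ => (hfeas1 i).trace_mul_nonneg (hM i)] at hs_zero
  exact ⟨fun i => ((hfeas1 i).trace_mul_eq_zero_iff (hM i)).mp (hs_zero i (Finset.mem_univ i)),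
    (hfeas2.trace_mul_eq_zero_iff hM0).mp h₀⟩

/-- Necessity of complementary slackness: if a dual feasible pair (X̂, δ̂) and a
measurement with P_I = β attain equality P_D = Tr(X̂) − δ̂β, then the
complementary slackness conditions hold. -/
theorem stmt_3 {n m : ℕ}
    (ρ : Fin m → Matrix (Fin n) (Fin n) ℂ) (p : Fin m → ℝ)
    (hρpsd : ∀ i, (ρ i).PosSemidef) (hρtr : ∀ i, (ρ i).trace = 1)
    (hp : ∀ i, 0 < p i) (hpsum : ∑ i, p i = 1)
    (Δ : Matrix (Fin n) (Fin n) ℂ) (hΔ : Δ = ∑ i, (p i : ℂ) • ρ i)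
    -- the dual feasible point
    (X : Matrix (Fin n) (Fin n) ℂ) (hX : X.IsHermitian) (δ : ℝ)
    (hfeas1 : ∀ i, (X - (p i : ℂ) • ρ i).PosSemidef)
    (hfeas2 : (X - (δ : ℂ) • Δ).PosSemidef)
    -- a measurement with P_I = β attaining the dual value
    (β : ℝ)
    (M0 : Matrix (Fin n) (Fin n) ℂ) (M : Fin m → Matrix (Fin n) (Fin n) ℂ)
    (hM0 : M0.PosSemidef) (hM : ∀ i, (M i).PosSemidef)
    (hMsum : M0 + ∑ i, M i = 1)
    (hPI : (Δ * M0).trace = (β : ℂ))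
    (hPD : ∑ i, p i * ((ρ i * M i).trace).re = X.trace.re - δ * β) :
    (∀ i, (X - (p i : ℂ) • ρ i) * M i = 0) ∧ (X - (δ : ℂ) • Δ) * M0 = 0 :=
  stmt_3_general ρ p Δ X δ hfeas1 hfeas2 β M0 M hM0 hM hMsum hPI hPD
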